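/- arXiv:2110.07647 — 3 statements merged into one kernel-verified Lean document; each statement's English description precedes it below -/
import Mathlib

section
/- Consider pairwise disjoint finite sets X_1, …, X_k ⊆ ℝ^n with N total points, and suppose the mixing probability measure μ (supported in [0,1]) is absolutely continuous with respect to Lebesgue measure. Then for every class i and every x ∈ X_i, the denominator defining h_ε^i(x) is positive for all ε > 0, and lim_{ε→0⁺} h_ε^i(x) = 1 (hence lim_{ε→0⁺} h_ε^j(x) = 0 for every j ≠ i). In other words, the Mixup-optimal classifier assigns every original data point its correct class. -/
open MeasureTheory

noncomputable section

variable {E : Type*} [NormedAddCommGroup E] [NormedSpace ℝ E]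

/-- The set of mixing coefficients `λ ∈ [0,1]` for which the mixed point
`λ • s + (1 - λ) • t` lies within distance `ε` of `x`. -/
def mixSet (s t x : E) (ε : ℝ) : Set ℝ :=
  {l : ℝ | l ∈ Set.Icc (0 : ℝ) 1 ∧ ‖l • s + (1 - l) • t - x‖ < ε}

/-- `ξ^{i,j}_{x,ε}`: the (normalized) measure of pairs and coefficients mixing
a point of `Xi` with a point of `Xj` into the `ε`-ball around `x`. -/
def xiMeas (μ : Measure ℝ) (N : ℕ) (Xi Xj : Finset E) (x : E) (ε : ℝ) : ℝ :=
  (1 / (N : ℝ) ^ 2) * ∑ s ∈ Xi, ∑ t ∈ Xj, (μ (mixSet s t x ε)).toReal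

/-- `ξ^{i,j}_{x,ε,λ}`: the corresponding expectation of `λ`. -/
def xiLam (μ : Measure ℝ) (N : ℕ) (Xi Xj : Finset E) (x : E) (ε : ℝ) : ℝ :=
  (1 / (N : ℝ) ^ 2) * ∑ s ∈ Xi, ∑ t ∈ Xj, ∫ l in mixSet s t x ε, l ∂μ

/-- Numerator of the Mixup-optimal local classifier value `h_ε^i(x)`. -/
def hNum {k : ℕ} (μ : Measure ℝ) (N : ℕ) (X : Fin k → Finset E) (i : Fin k)
    (x : E) (ε : ℝ) : ℝ :=
  xiMeas μ N (X i) (X i) x ε +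
    ∑ j ∈ Finset.univ.filter (fun j => j ≠ i),
      (xiLam μ N (X i) (X j) x ε +
        (xiMeas μ N (X j) (X i) x ε - xiLam μ N (X j) (X i) x ε))

/-- Denominator of the Mixup-optimal local classifier value. -/
def hDen {k : ℕ} (μ : Measure ℝ) (N : ℕ) (X : Fin k → Finset E) (x : E) (ε : ℝ) : ℝ :=
  ∑ q : Fin k, hNum μ N X q x ε

/-- The Mixup-optimal local classifier value `h_ε^i(x)`. -/
def hEps {k : ℕ} (μ : Measure ℝ) (N : ℕ) (X : Fin k → Finset E) (i : Fin k)
    (x : E) (ε : ℝ) : ℝ :=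
  hNum μ N X i x ε / hDen μ N X x ε

end

/-! As `ε → 0⁺` the sets `mixSet s t x ε` decrease to the set of `λ ∈ [0,1]` with
`λ • s + (1 - λ) • t = x`. For `(s, t) = (x, x)` this is all of `[0,1]`, of `μ`-mass one;
otherwise it is empty (`s = t ≠ x`) or a single point (`s ≠ t`), hence `μ`-null since `μ ≪ volume`.
By disjointness the pair `(x, x)` occurs only in `ξ^{i,i}`, so every term of every numerator tends
to `0` except `ξ^{i,i}_{x,ε} → 1 / N²`; for each `ε > 0` the same pair already contributes `1 / N²`
to the denominator, while all other terms are nonnegative because `λ ≤ 1`. -/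

open MeasureTheory Filter Topology Set Function

section MixSet

variable {E : Type*} [NormedAddCommGroup E] [NormedSpace ℝ E] (s t x : E)

theorem measurableSet_mixSet (ε : ℝ) : MeasurableSet (mixSet s t x ε) :=
  measurableSet_Icc.inter (isOpen_lt (f := fun l : ℝ => ‖l • s + (1 - l) • t - x‖)
    (by fun_prop) continuous_const).measurableSet

theorem mixSet_mono {ε ε' : ℝ} (h : ε ≤ ε') : mixSet s t x ε ⊆ mixSet s t x ε' :=
  fun _ hl => ⟨hl.1, hl.2.trans_le h⟩

theorem mixSet_self {ε : ℝ} (hε : 0 < ε) : mixSet x x x ε = Icc 0 1 := by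
  ext l
  simp [mixSet, ← add_smul, hε]

theorem biInter_mixSet :
    ⋂ ε > (0 : ℝ), mixSet s t x ε = {l ∈ Icc (0 : ℝ) 1 | l • s + (1 - l) • t = x} := by
  ext l
  simp only [mem_iInter, mixSet, mem_ofPred_eq]
  constructor
  · intro h
    refine ⟨(h 1 one_pos).1, ?_⟩
    by_contra hne
    exact lt_irrefl _ (h _ (norm_pos_iff.2 (sub_ne_zero.2 hne))).2
  · rintro ⟨hl, rfl⟩ ε hε
    simpa using ⟨hl, hε⟩

theorem subsingleton_setOf_mix_eq (hst : s ≠ t) : {l : ℝ | l • s + (1 - l) • t = x}.Subsingleton := by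
  have hline : ∀ l : ℝ, l • s + (1 - l) • t = x → AffineMap.lineMap t s l = x := fun l hl => by
    rwa [AffineMap.lineMap_apply_module, add_comm]
  exact fun a ha b hb => AffineMap.lineMap_injective ℝ hst.symm ((hline a ha).trans (hline b hb).symm)

theorem measure_setOf_mix_eq_eq_zero {μ : Measure ℝ} (hac : μ ≪ volume) (h : s ≠ x ∨ t ≠ x) :
    μ {l ∈ Icc (0 : ℝ) 1 | l • s + (1 - l) • t = x} = 0 := by
  rcases eq_or_ne s t with rfl | hst
  · have hs : s ≠ x := by tauto
    convert measure_empty (μ := μ)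
    ext l
    simp [← add_smul, hs]
  · exact hac (((subsingleton_setOf_mix_eq s t x hst).anti fun _ hl => hl.2).measure_zero volume)

variable (μ : Measure ℝ)

theorem setIntegral_mixSet_nonneg (ε : ℝ) : 0 ≤ ∫ l in mixSet s t x ε, l ∂μ :=
  setIntegral_nonneg (measurableSet_mixSet s t x ε) fun _ hl => hl.1.1

variable [IsFiniteMeasure μ]

theorem tendsto_measure_mixSet :
    Tendsto (fun ε => μ (mixSet s t x ε)) (𝓝[>] 0)
      (𝓝 (μ {l ∈ Icc (0 : ℝ) 1 | l • s + (1 - l) • t = x})) := by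
  rw [← biInter_mixSet]
  exact tendsto_measure_biInter_gt (fun ε _ => (measurableSet_mixSet s t x ε).nullMeasurableSet)
    (fun _ _ _ h => mixSet_mono s t x h) ⟨1, one_pos, measure_ne_top μ _⟩

theorem tendsto_measureReal_mixSet [DecidableEq E] (hac : μ ≪ volume) (hIcc : μ (Icc 0 1) = 1) :
    Tendsto (fun ε => (μ (mixSet s t x ε)).toReal) (𝓝[>] 0)
      (𝓝 (if s = x ∧ t = x then 1 else 0)) := by
  split_ifs with h
  · obtain ⟨rfl, rfl⟩ := h
    refine tendsto_const_nhds.congr' ?_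
    filter_upwards [self_mem_nhdsWithin] with ε hε
    rw [mixSet_self _ hε, hIcc, ENNReal.toReal_one]
  · have hlim := (ENNReal.tendsto_toReal (measure_ne_top μ _)).comp (tendsto_measure_mixSet s t x μ)
    rwa [measure_setOf_mix_eq_eq_zero s t x hac (not_and_or.1 h), ENNReal.toReal_zero] at hlim

theorem setIntegral_mixSet_le (ε : ℝ) :
    ∫ l in mixSet s t x ε, l ∂μ ≤ (μ (mixSet s t x ε)).toReal := by
  have hmeas := measurableSet_mixSet s t x ε
  calc ∫ l in mixSet s t x ε, l ∂μ ≤ ∫ _ in mixSet s t x ε, (1 : ℝ) ∂μ :=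
        setIntegral_mono_on
          (Measure.integrableOn_of_bounded (M := 1) (measure_ne_top μ _) aestronglyMeasurable_id
            ((ae_restrict_mem hmeas).mono fun l hl => abs_le.2 ⟨by linarith [hl.1.1], hl.1.2⟩))
          (integrableOn_const (measure_ne_top μ _)) hmeas fun _ hl => hl.1.2
    _ = (μ (mixSet s t x ε)).toReal := by simp [measureReal_def]

end MixSet

section Classifier

variable {E : Type*} [NormedAddCommGroup E] [NormedSpace ℝ E]
  (μ : Measure ℝ) (N : ℕ) (x : E)

theorem xiMeas_nonneg (A B : Finset E) (ε : ℝ) : 0 ≤ xiMeas μ N A B x ε :=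
  mul_nonneg (by positivity) <| Finset.sum_nonneg fun _ _ =>
    Finset.sum_nonneg fun _ _ => ENNReal.toReal_nonneg

theorem xiLam_nonneg (A B : Finset E) (ε : ℝ) : 0 ≤ xiLam μ N A B x ε :=
  mul_nonneg (by positivity) <| Finset.sum_nonneg fun s _ =>
    Finset.sum_nonneg fun t _ => setIntegral_mixSet_nonneg s t x μ ε

theorem one_div_sq_le_xiMeas_self (hIcc : μ (Icc 0 1) = 1) {A : Finset E} (hx : x ∈ A)
    {ε : ℝ} (hε : 0 < ε) : 1 / (N : ℝ) ^ 2 ≤ xiMeas μ N A A x ε := by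
  have hterm : ∀ s t : E, 0 ≤ (μ (mixSet s t x ε)).toReal := fun _ _ => ENNReal.toReal_nonneg
  have hone : 1 ≤ ∑ s ∈ A, ∑ t ∈ A, (μ (mixSet s t x ε)).toReal :=
    calc (1 : ℝ) = (μ (mixSet x x x ε)).toReal := by rw [mixSet_self x hε, hIcc, ENNReal.toReal_one]
      _ ≤ ∑ t ∈ A, (μ (mixSet x t x ε)).toReal :=
        Finset.single_le_sum (fun t _ => hterm x t) hx
      _ ≤ _ := Finset.single_le_sum (f := fun s => ∑ t ∈ A, (μ (mixSet s t x ε)).toReal)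
        (fun s _ => Finset.sum_nonneg fun t _ => hterm s t) hx
  unfold xiMeas
  simpa using mul_le_mul_of_nonneg_left hone (by positivity : (0 : ℝ) ≤ 1 / (N : ℝ) ^ 2)

variable [IsFiniteMeasure μ]

theorem xiLam_le_xiMeas (A B : Finset E) (ε : ℝ) : xiLam μ N A B x ε ≤ xiMeas μ N A B x ε :=
  mul_le_mul_of_nonneg_left (Finset.sum_le_sum fun s _ =>
    Finset.sum_le_sum fun t _ => setIntegral_mixSet_le s t x μ ε) (by positivity)

theorem xiMeas_le_hNum {k : ℕ} (X : Fin k → Finset E) (i : Fin k) (ε : ℝ) :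
    xiMeas μ N (X i) (X i) x ε ≤ hNum μ N X i x ε :=
  le_add_of_nonneg_right <| Finset.sum_nonneg fun _ _ =>
    add_nonneg (xiLam_nonneg μ N x _ _ ε) (sub_nonneg.2 (xiLam_le_xiMeas μ N x _ _ ε))

theorem hNum_le_hDen {k : ℕ} (X : Fin k → Finset E) (i : Fin k) (ε : ℝ) :
    hNum μ N X i x ε ≤ hDen μ N X x ε :=
  Finset.single_le_sum (fun q _ => (xiMeas_nonneg μ N x _ _ ε).trans (xiMeas_le_hNum μ N x X q ε))
    (Finset.mem_univ i)

theorem one_div_sq_le_hDen (hIcc : μ (Icc 0 1) = 1) {k : ℕ} {X : Fin k → Finset E} {i : Fin k}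
    (hx : x ∈ X i) {ε : ℝ} (hε : 0 < ε) : 1 / (N : ℝ) ^ 2 ≤ hDen μ N X x ε :=
  calc 1 / (N : ℝ) ^ 2 ≤ xiMeas μ N (X i) (X i) x ε := one_div_sq_le_xiMeas_self μ N x hIcc hx hε
    _ ≤ hNum μ N X i x ε := xiMeas_le_hNum μ N x X i ε
    _ ≤ hDen μ N X x ε := hNum_le_hDen μ N x X i ε

variable [DecidableEq E] (hac : μ ≪ volume) (hIcc : μ (Icc 0 1) = 1)
include hac hIcc

theorem tendsto_xiMeas (A B : Finset E) :
    Tendsto (fun ε => xiMeas μ N A B x ε) (𝓝[>] 0)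
      (𝓝 (if x ∈ A ∧ x ∈ B then 1 / (N : ℝ) ^ 2 else 0)) := by
  have hlim := ((tendsto_finsetSum A fun s _ => tendsto_finsetSum B fun t _ =>
    tendsto_measureReal_mixSet s t x μ hac hIcc)).const_mul (1 / (N : ℝ) ^ 2)
  simp only [xiMeas]
  convert hlim using 2
  by_cases hA : x ∈ A <;> by_cases hB : x ∈ B <;> simp [ite_and, hA, hB]

theorem tendsto_xiLam_zero {A B : Finset E} (h : ¬(x ∈ A ∧ x ∈ B)) :
    Tendsto (fun ε => xiLam μ N A B x ε) (𝓝[>] 0) (𝓝 0) := by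
  have hterm : ∀ s ∈ A, ∀ t ∈ B,
      Tendsto (fun ε => ∫ l in mixSet s t x ε, l ∂μ) (𝓝[>] 0) (𝓝 0) := by
    intro s hs t ht
    have hpair : ¬(s = x ∧ t = x) := by rintro ⟨rfl, rfl⟩; exact h ⟨hs, ht⟩
    have hmeas := tendsto_measureReal_mixSet s t x μ hac hIcc
    rw [if_neg hpair] at hmeas
    exact squeeze_zero (setIntegral_mixSet_nonneg s t x μ) (setIntegral_mixSet_le s t x μ) hmeas
  unfold xiLam
  simpa only [Finset.sum_const_zero, mul_zero] using (tendsto_finsetSum A fun s hs =>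
    tendsto_finsetSum B fun t ht => hterm s hs t ht).const_mul (1 / (N : ℝ) ^ 2)

theorem tendsto_hNum {k : ℕ} {X : Fin k → Finset E} (hdisj : Pairwise (Disjoint on X))
    (q : Fin k) :
    Tendsto (fun ε => hNum μ N X q x ε) (𝓝[>] 0)
      (𝓝 (if x ∈ X q then 1 / (N : ℝ) ^ 2 else 0)) := by
  have hcross : ∀ j ∈ Finset.univ.filter (· ≠ q), Tendsto (fun ε =>
      xiLam μ N (X q) (X j) x ε + (xiMeas μ N (X j) (X q) x ε - xiLam μ N (X j) (X q) x ε))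
      (𝓝[>] 0) (𝓝 0) := by
    intro j hj
    have hjq : j ≠ q := (Finset.mem_filter.1 hj).2
    have hnot : ∀ {a b}, a ≠ b → ¬(x ∈ X a ∧ x ∈ X b) := fun hab h =>
      Finset.disjoint_left.1 (hdisj hab) h.1 h.2
    have hmeas := tendsto_xiMeas μ N x hac hIcc (X j) (X q)
    rw [if_neg (hnot hjq)] at hmeas
    simpa using (tendsto_xiLam_zero μ N x hac hIcc (hnot hjq.symm)).add
      (hmeas.sub (tendsto_xiLam_zero μ N x hac hIcc (hnot hjq)))
  simpa [hNum] using (tendsto_xiMeas μ N x hac hIcc (X q) (X q)).add (tendsto_finsetSum _ hcross)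

theorem tendsto_hDen {k : ℕ} {X : Fin k → Finset E} (hdisj : Pairwise (Disjoint on X))
    {i : Fin k} (hx : x ∈ X i) :
    Tendsto (fun ε => hDen μ N X x ε) (𝓝[>] 0) (𝓝 (1 / (N : ℝ) ^ 2)) := by
  have hlim := tendsto_finsetSum Finset.univ fun q _ => tendsto_hNum μ N x hac hIcc hdisj q
  rwa [Finset.sum_eq_single_of_mem i (Finset.mem_univ i) fun q _ hqi =>
    if_neg fun hq => Finset.disjoint_left.1 (hdisj hqi) hq hx, if_pos hx] at hlim

end Classifier

open MeasureTheory Filter in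
/-- For finite pairwise-disjoint class supports and an absolutely continuous mixing measure,
the Mixup-optimal classifier assigns every original data point its correct class:
the denominator is positive for all `ε > 0`, `h_ε^i(x) → 1` as `ε → 0⁺` for `x ∈ X_i`,
and `h_ε^j(x) → 0` for every `j ≠ i`. -/
theorem mixup_correct_on_original_points
    {n k : ℕ} (X : Fin k → Finset (EuclideanSpace ℝ (Fin n)))
    (hdisj : ∀ i j : Fin k, i ≠ j → Disjoint (X i) (X j))
    (N : ℕ) (hN : N = ∑ i, (X i).card)
    (μ : Measure ℝ) [IsProbabilityMeasure μ]
    (hsupp : μ (Set.Icc (0 : ℝ) 1)ᶜ = 0) (hac : μ ≪ volume)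
    (i : Fin k) (x : EuclideanSpace ℝ (Fin n)) (hx : x ∈ X i) :
    (∀ ε > (0 : ℝ), 0 < hDen μ N X x ε) ∧
    Tendsto (fun ε => hEps μ N X i x ε) (nhdsWithin 0 (Set.Ioi 0)) (nhds 1) ∧
    ∀ j : Fin k, j ≠ i →
      Tendsto (fun ε => hEps μ N X j x ε) (nhdsWithin 0 (Set.Ioi 0)) (nhds 0) := by
  classical
  have hIcc : μ (Icc 0 1) = 1 := (prob_compl_eq_zero_iff measurableSet_Icc).1 hsupp
  have hN0 : (0 : ℝ) < 1 / (N : ℝ) ^ 2 := by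
    have : 0 < N := hN ▸ Finset.sum_pos' (fun _ _ => Nat.zero_le _)
      ⟨i, Finset.mem_univ i, Finset.card_pos.2 ⟨x, hx⟩⟩
    positivity
  have hden := tendsto_hDen μ N x hac hIcc hdisj hx
  refine ⟨fun ε hε => hN0.trans_le (one_div_sq_le_hDen μ N x hIcc hx hε), ?_, fun j hj => ?_⟩
  · have hlim := (tendsto_hNum μ N x hac hIcc hdisj i).div hden hN0.ne'
    rwa [if_pos hx, div_self hN0.ne'] at hlim
  · have hxj : x ∉ X j := fun h => Finset.disjoint_left.1 (hdisj j i hj) h hx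
    have hlim := (tendsto_hNum μ N x hac hIcc hdisj j).div hden hN0.ne'
    rwa [if_neg hxj, zero_div] at hlim
end

section
/- Let m > 6 and let A be the Mixup matrix. Let π be a bijection of the row index set (the unordered pairs of distinct elements of {1, …, m}) and let PA denote the row-permuted matrix (PA)_{r,k} = A_{π(r),k}. If there is no permutation σ of the columns {1, …, m} such that (PA)_{r,k} = A_{r,σ(k)} for all rows r and columns k, then the rank of the m(m−1)/2 × 2m matrix [A, PA], obtained by concatenating the columns of PA after those of A, is strictly greater than m. -/
/-- Row index set of the Mixup matrix: unordered pairs of distinct elements of `{1, …, m}`. -/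
abbrev PairIdx (m : ℕ) := {p : Sym2 (Fin m) // ¬p.IsDiag}

/-- The Mixup matrix: rows indexed by unordered pairs `{i, j}` of distinct indices,
columns by `{1, …, m}`, with entry `1` iff the column index belongs to the pair. -/
def mixupMatrix (m : ℕ) : Matrix (PairIdx m) (Fin m) ℝ :=
  fun r k => if k ∈ r.1 then 1 else 0

/-!
If `rank [A, PA] ≤ m = rank A`, every column of `PA` is `A x` for some `x`, that is,
`x i + x j ∈ {0, 1}` for every pair `{i, j}`. As `π` is a bijection, that column has `m - 1`
ones, like every column of `A`, which forces `∑ i, x i = 1`. For `m ≥ 5` the only such `x` are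
the unit vectors (for `m = 4`, `x = (-1/2, 1/2, 1/2, 1/2)` is another one), so every column of
`PA` is a column of `A`. The resulting map on columns is injective, hence a permutation.
-/

open Matrix

theorem Fintype.exists_ne_ne {α : Type*} [Fintype α] (h : 2 < Fintype.card α) (a b : α) :
    ∃ c, c ≠ a ∧ c ≠ b := by
  classical
  obtain ⟨c, -, hc⟩ := Finset.exists_mem_notMem_of_card_lt_card
    (s := {a, b}) (t := Finset.univ) (Finset.card_le_two.trans_lt h)
  exact ⟨c, by simpa [not_or] using hc⟩

theorem Fintype.add_mul_le_sum_of_forall_ne {α : Type*} [Fintype α] (x : α → ℝ) (i : α) {c : ℝ}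
    (h : ∀ j ≠ i, c ≤ x j) : x i + ((Fintype.card α : ℝ) - 1) * c ≤ ∑ j, x j := by
  classical
  rw [← Finset.add_sum_erase _ _ (Finset.mem_univ i)]
  gcongr
  have := Finset.card_nsmul_le_sum (Finset.univ.erase i) x c
    fun j hj => h j (Finset.ne_of_mem_erase hj)
  simpa [Finset.card_erase_of_mem, Nat.cast_sub (Fintype.card_pos_iff.mpr ⟨i⟩)] using this

theorem Matrix.exists_mulVec_eq_col_of_rank_fromCols_le {K ι m n : Type*} [Field K]
    [Fintype ι] [Fintype m] [Fintype n] {A : Matrix ι m K} {B : Matrix ι n K}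
    (h : (fromCols A B).rank ≤ A.rank) (k : n) : ∃ x, A *ᵥ x = B.col k := by
  classical
  have hle : LinearMap.range A.mulVecLin ≤ LinearMap.range (fromCols A B).mulVecLin := by
    rintro _ ⟨x, rfl⟩
    exact ⟨Sum.elim x 0, by simp [fromCols_mulVec]⟩
  have hk : B.col k ∈ LinearMap.range (fromCols A B).mulVecLin :=
    ⟨Pi.single (Sum.inr k) 1, by ext; simp [fromCols]⟩
  rwa [← Submodule.eq_of_le_of_finrank_le hle h] at hk

namespace PairIdx

variable {m : ℕ}

def mk {i j : Fin m} (h : i ≠ j) : PairIdx m := ⟨s(i, j), by simpa using h⟩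

noncomputable def containingEquiv (k : Fin m) : {e : PairIdx m // k ∈ e.1} ≃ {j // j ≠ k} where
  toFun e := ⟨Sym2.Mem.other e.2, Sym2.other_ne e.1.2 e.2⟩
  invFun j := ⟨mk j.2.symm, Sym2.mem_mk_left _ _⟩
  left_inv e := Subtype.ext (Subtype.ext (Sym2.other_spec e.2))
  right_inv j := Subtype.ext (Sym2.congr_right.mp (Sym2.other_spec (Sym2.mem_mk_left k j.1)))

end PairIdx

section MixupMatrix

variable {m : ℕ}

theorem sum_mixupMatrix_apply (k : Fin m) : ∑ r, mixupMatrix m r k = (m : ℝ) - 1 := by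
  classical
  simp only [mixupMatrix]
  rw [Finset.sum_boole, ← Fintype.card_subtype, Fintype.card_congr (PairIdx.containingEquiv k)]
  simp [Fintype.card_subtype_compl, Nat.cast_sub (Nat.one_le_of_lt k.2)]

theorem mixupMatrix_mulVec_mk (x : Fin m → ℝ) {i j : Fin m} (h : i ≠ j) :
    (mixupMatrix m *ᵥ x) (PairIdx.mk h) = x i + x j := by
  classical
  simp only [mulVec, dotProduct, mixupMatrix, PairIdx.mk, Sym2.mem_iff, ite_mul, one_mul,
    zero_mul]
  rw [Finset.sum_ite, Finset.sum_const_zero, add_zero,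
    show Finset.univ.filter (fun k => k = i ∨ k = j) = {i, j} by ext; simp]
  exact Finset.sum_pair h

theorem mixupMatrix_mulVec_mk_add_sub (x : Fin m → ℝ) {i j k : Fin m}
    (hij : i ≠ j) (hik : i ≠ k) (hjk : j ≠ k) :
    (mixupMatrix m *ᵥ x) (PairIdx.mk hij) + (mixupMatrix m *ᵥ x) (PairIdx.mk hik)
      - (mixupMatrix m *ᵥ x) (PairIdx.mk hjk) = 2 * x i := by
  simp only [mixupMatrix_mulVec_mk]
  ring

theorem sum_mixupMatrix_mulVec (x : Fin m → ℝ) :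
    ∑ r, (mixupMatrix m *ᵥ x) r = ((m : ℝ) - 1) * ∑ i, x i := by
  simp only [mulVec, dotProduct]
  rw [Finset.sum_comm, Finset.mul_sum]
  simp only [← Finset.sum_mul, sum_mixupMatrix_apply]

theorem mixupMatrix_mulVec_injective (hm : 3 ≤ m) : Function.Injective (mixupMatrix m *ᵥ ·) := by
  intro x y hxy
  funext i
  have hcard : 2 < Fintype.card (Fin m) := by rw [Fintype.card_fin]; omega
  obtain ⟨j, hji, -⟩ := Fintype.exists_ne_ne hcard i i
  obtain ⟨k, hki, hkj⟩ := Fintype.exists_ne_ne hcard i j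
  have hx := mixupMatrix_mulVec_mk_add_sub x hji.symm hki.symm hkj.symm
  rw [show mixupMatrix m *ᵥ x = mixupMatrix m *ᵥ y from hxy,
    mixupMatrix_mulVec_mk_add_sub y] at hx
  linarith

theorem mixupMatrix_rank (hm : 3 ≤ m) : (mixupMatrix m).rank = m := by
  rw [Matrix.rank, LinearMap.finrank_range_of_inj (mixupMatrix_mulVec_injective hm),
    Module.finrank_fin_fun]

theorem mixupMatrix_col_injective (hm : 3 ≤ m) : Function.Injective (mixupMatrix m).col := by
  intro a b hab
  rw [← mulVec_single_one, ← mulVec_single_one] at hab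
  have := congrFun (mixupMatrix_mulVec_injective hm hab) a
  by_contra h
  simp [Ne.symm h] at this

theorem exists_eq_single_of_mixupMatrix_mulVec (hm : 5 ≤ m) {x : Fin m → ℝ}
    (h01 : ∀ r, (mixupMatrix m *ᵥ x) r = 0 ∨ (mixupMatrix m *ᵥ x) r = 1)
    (hsum : ∑ r, (mixupMatrix m *ᵥ x) r = (m : ℝ) - 1) : ∃ v, x = Pi.single v 1 := by
  have hm' : (5 : ℝ) ≤ m := by exact_mod_cast hm
  have hcard : 2 < Fintype.card (Fin m) := by rw [Fintype.card_fin]; omega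
  have hpair : ∀ {i j} (h : i ≠ j), x i + x j = 0 ∨ x i + x j = 1 := fun h => by
    simpa only [mixupMatrix_mulVec_mk] using h01 (PairIdx.mk h)
  have hsumx : ∑ i, x i = 1 := by
    rw [sum_mixupMatrix_mulVec] at hsum
    exact (mul_eq_left₀ (by linarith)).mp hsum
  -- A negative `x i` can only be `-1/2`; then `x j ≥ 1/2` for all `j ≠ i`, and `∑ x > 1`.
  have hnonneg : ∀ i, 0 ≤ x i := by
    intro i
    by_contra! hneg
    obtain ⟨j, hji, -⟩ := Fintype.exists_ne_ne hcard i i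
    obtain ⟨k, hki, hkj⟩ := Fintype.exists_ne_ne hcard i j
    have hx := mixupMatrix_mulVec_mk_add_sub x hji.symm hki.symm hkj.symm
    have hhalf : x i = -1 / 2 := by
      rcases h01 (PairIdx.mk hji.symm) with h1 | h1 <;>
        rcases h01 (PairIdx.mk hki.symm) with h2 | h2 <;>
        rcases h01 (PairIdx.mk hkj.symm) with h3 | h3 <;> linarith
    have := Fintype.add_mul_le_sum_of_forall_ne x i (c := 1 / 2) fun j hj => by
      rcases hpair hj.symm with h | h <;> linarith
    rw [Fintype.card_fin] at this
    nlinarith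
  obtain ⟨v, -, hv⟩ := Finset.exists_lt_of_sum_lt (s := Finset.univ) (f := 0) (g := x)
    (by simp [hsumx])
  have hrest : ∀ j ≠ v, x j = 1 - x v := fun j hj => by
    rcases hpair hj.symm with h | h
    · linarith [hnonneg j, show (0 : ℝ) < x v from hv]
    · linarith
  obtain ⟨w, hwv, -⟩ := Fintype.exists_ne_ne hcard v v
  have hv1 : x v = 1 := by
    have := Fintype.add_mul_le_sum_of_forall_ne x v (c := 1 - x v) fun j hj => (hrest j hj).ge
    rw [Fintype.card_fin] at this
    nlinarith [hnonneg w, hrest w hwv]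
  refine ⟨v, funext fun j => ?_⟩
  rcases eq_or_ne j v with rfl | hj
  · simp [hv1]
  · simp [hj, hrest j hj, hv1]

theorem exists_mixupMatrix_col_eq_of_mulVec_eq (hm : 5 ≤ m) (π : Equiv.Perm (PairIdx m))
    (k : Fin m) {x : Fin m → ℝ} (hx : mixupMatrix m *ᵥ x = fun r => mixupMatrix m (π r) k) :
    ∃ v, ∀ r, mixupMatrix m (π r) k = mixupMatrix m r v := by
  have h01 : ∀ r, (mixupMatrix m *ᵥ x) r = 0 ∨ (mixupMatrix m *ᵥ x) r = 1 := fun r => by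
    rw [hx]
    by_cases h : k ∈ (π r).1 <;> simp [mixupMatrix, h]
  have hsum : ∑ r, (mixupMatrix m *ᵥ x) r = (m : ℝ) - 1 := by
    rw [hx, Equiv.sum_comp π fun r => mixupMatrix m r k, sum_mixupMatrix_apply]
  obtain ⟨v, rfl⟩ := exists_eq_single_of_mixupMatrix_mulVec hm h01 hsum
  refine ⟨v, fun r => ?_⟩
  rw [← congrFun hx r, mulVec_single_one, col_apply]

end MixupMatrix

/-- Lemma 2 of the paper: if `m > 6` and a row permutation `π` of the Mixup matrix `A`
is not a column permutation of `A`, then `[A, PA]` has rank greater than `m`. -/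
theorem mixup_matrix_concat_rank (m : ℕ) (hm : 6 < m) (π : Equiv.Perm (PairIdx m))
    (hnoperm : ¬∃ σ : Equiv.Perm (Fin m),
      ∀ (r : PairIdx m) (k : Fin m), mixupMatrix m (π r) k = mixupMatrix m r (σ k)) :
    m < (Matrix.fromCols (mixupMatrix m) (fun r k => mixupMatrix m (π r) k)).rank := by
  by_contra! hrank
  choose x hx using
    exists_mulVec_eq_col_of_rank_fromCols_le (hrank.trans (mixupMatrix_rank (by omega)).ge)
  choose σ hσ using fun k => exists_mixupMatrix_col_eq_of_mulVec_eq (by omega) π k (hx k)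
  have hσinj : Function.Injective σ := fun a b hab =>
    mixupMatrix_col_injective (by omega) <| funext fun r => by
      simpa [hab, ← hσ b] using hσ a (π.symm r)
  exact hnoperm ⟨Equiv.ofBijective σ (Finite.injective_iff_bijective.mp hσinj), fun r k => hσ k r⟩
end

section
/- Let d ≥ 2, let μ be a probability measure on ℝ whose topological support equals [0,1] and which is symmetric (its pushforward under λ ↦ 1−λ equals μ), and let x, z ∈ ℝ^d be linearly independent. Then every θ in the linear span of {x, z} that minimizes the two-point Mixup loss g over span{x, z} satisfies ⟨θ, x⟩ = −⟨θ, z⟩ and this common value is strictly positive. -/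
open MeasureTheory
open scoped RealInnerProductSpace

/-- The logistic loss `ℓ(u) = log(1 + exp(-u))`. -/
noncomputable def logisticLoss (u : ℝ) : ℝ := Real.log (1 + Real.exp (-u))

/-- The two-point Mixup (logistic) loss for a linear classifier `θ`, where `x` has label
`+1` and `z` has label `-1`:
`g(θ) = ∫ [λ ℓ(⟪θ, λx+(1-λ)z⟫) + (1-λ) ℓ(-⟪θ, λx+(1-λ)z⟫)] dμ(λ)`. -/
noncomputable def twoPointMixupLoss {d : ℕ} (μ : Measure ℝ)
    (x z θ : EuclideanSpace ℝ (Fin d)) : ℝ :=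
  ∫ l, (l * logisticLoss ⟪θ, l • x + (1 - l) • z⟫ +
    (1 - l) * logisticLoss (-⟪θ, l • x + (1 - l) • z⟫)) ∂μ

/-! The loss depends on `θ` only through the scores `a = ⟪θ, x⟫` and `b = ⟪θ, z⟫`, and by linear
independence every pair of scores is attained in `span {x, z}`. The symmetry of `μ` makes the
reduced loss invariant under `(a, b) ↦ (-b, -a)`. Since `ℓ(-s) = ℓ(s) + s`, the integrand is `ℓ`
of the mixed score plus a linear term, and moving `(a, b)` along the diagonal shifts every mixed
score by the same amount; strict convexity of `ℓ` then forces a minimizer to satisfy `a = -b`.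
On the antidiagonal, `ℓ(u) = log 2 - u / 2 + log (cosh (u / 2))` with `1 ≤ cosh y ≤ exp (y ^ 2 / 2)`
gives a loss `≥ log 2` at `(t, -t)` for `t ≤ 0`, but `≤ log 2 - ∫ (2λ - 1)² dμ / 2 < log 2` at
`(2, -2)`, because `μ` is not concentrated at `1 / 2`. -/

open Real Set

lemma logisticLoss_eq_log_cosh (u : ℝ) :
    logisticLoss u = log 2 - u / 2 + log (cosh (u / 2)) := by
  have h : 1 + exp (-u) = exp (-(u / 2)) * (2 * cosh (u / 2)) := by
    rw [cosh_eq, mul_div_cancel₀ _ two_ne_zero, mul_add, ← exp_add, ← exp_add]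
    ring_nf
    rw [exp_zero, add_comm]
  rw [logisticLoss, h, log_mul (exp_ne_zero _) (by positivity),
    log_mul two_ne_zero (cosh_pos _).ne', log_exp]
  ring

lemma logisticLoss_neg (u : ℝ) : logisticLoss (-u) = logisticLoss u + u := by
  rw [logisticLoss_eq_log_cosh, logisticLoss_eq_log_cosh, neg_div, cosh_neg]
  ring

lemma log_two_sub_half_le_logisticLoss (u : ℝ) : log 2 - u / 2 ≤ logisticLoss u := by
  rw [logisticLoss_eq_log_cosh]
  linarith [log_nonneg (one_le_cosh (u / 2))]

lemma logisticLoss_le (u : ℝ) : logisticLoss u ≤ log 2 - u / 2 + u ^ 2 / 8 := by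
  have h : log (cosh (u / 2)) ≤ u ^ 2 / 8 := by
    rw [log_le_iff_le_exp (cosh_pos _)]
    convert cosh_le_exp_half_sq (u / 2) using 2
    ring
  rw [logisticLoss_eq_log_cosh]
  linarith

@[fun_prop]
lemma continuous_logisticLoss : Continuous logisticLoss :=
  (continuous_const.add (continuous_exp.comp continuous_neg)).log fun _ =>
    (add_pos one_pos (exp_pos _)).ne'

lemma hasDerivAt_logisticLoss (u : ℝ) :
    HasDerivAt logisticLoss (-(exp u + 1)⁻¹) u := by
  have h : HasDerivAt (fun v => 1 + exp (-v)) (-exp (-u)) u := by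
    simpa using ((hasDerivAt_exp (-u)).comp u (hasDerivAt_neg u)).const_add 1
  refine (h.log (by positivity)).congr_deriv ?_
  rw [exp_neg]
  field_simp

lemma strictConvexOn_logisticLoss : StrictConvexOn ℝ univ logisticLoss := by
  refine StrictMonoOn.strictConvexOn_of_deriv convex_univ
    continuous_logisticLoss.continuousOn fun u _ v _ huv => ?_
  simp only [(hasDerivAt_logisticLoss _).deriv, neg_lt_neg_iff]
  gcongr

noncomputable def mixupScoreLoss (l s : ℝ) : ℝ :=
  l * logisticLoss s + (1 - l) * logisticLoss (-s)

lemma mixupScoreLoss_eq (l s : ℝ) : mixupScoreLoss l s = logisticLoss s + (1 - l) * s := by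
  rw [mixupScoreLoss, logisticLoss_neg]
  ring

lemma mixupScoreLoss_one_sub_neg (l s : ℝ) : mixupScoreLoss (1 - l) (-s) = mixupScoreLoss l s := by
  rw [mixupScoreLoss, mixupScoreLoss, neg_neg]
  ring

lemma mixupScoreLoss_midpoint_lt (l : ℝ) {s t : ℝ} (hst : s ≠ t) :
    mixupScoreLoss l ((s + t) / 2) < (mixupScoreLoss l s + mixupScoreLoss l t) / 2 := by
  have h := strictConvexOn_logisticLoss.2 (mem_univ s) (mem_univ t) hst
    (by norm_num : (0 : ℝ) < 1 / 2) (by norm_num : (0 : ℝ) < 1 / 2) (by norm_num)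
  simp only [smul_eq_mul, mixupScoreLoss_eq] at h ⊢
  rw [show 1 / 2 * s + 1 / 2 * t = (s + t) / 2 by ring] at h
  linarith [show (1 - l) * ((s + t) / 2) = ((1 - l) * s + (1 - l) * t) / 2 by ring]

/-- `twoPointMixupLoss μ x z θ` as a function of the scores `a = ⟪θ, x⟫` and `b = ⟪θ, z⟫`. -/
noncomputable def mixupLoss (μ : Measure ℝ) (a b : ℝ) : ℝ :=
  ∫ l, mixupScoreLoss l (l * a + (1 - l) * b) ∂μ

lemma twoPointMixupLoss_eq_mixupLoss {d : ℕ} (μ : Measure ℝ) (x z θ : EuclideanSpace ℝ (Fin d)) :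
    twoPointMixupLoss μ x z θ = mixupLoss μ ⟪θ, x⟫ ⟪θ, z⟫ := by
  simp only [twoPointMixupLoss, mixupLoss, mixupScoreLoss, inner_add_right,
    real_inner_smul_right]

lemma mixupLoss_neg_swap {μ : Measure ℝ} (hsym : μ.map (fun l => 1 - l) = μ) (a b : ℝ) :
    mixupLoss μ (-b) (-a) = mixupLoss μ a b := by
  have hf : Continuous fun l => mixupScoreLoss l (l * -b + (1 - l) * -a) := by
    unfold mixupScoreLoss
    fun_prop
  conv_lhs => rw [mixupLoss, ← hsym, integral_map (by fun_prop) hf.aestronglyMeasurable]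
  congr 1 with l
  rw [← mixupScoreLoss_one_sub_neg]
  ring_nf

lemma Continuous.integrable_of_ae_mem_compact {α : Type*} [TopologicalSpace α] [MeasurableSpace α]
    [OpensMeasurableSpace α] [T2Space α] {μ : Measure α} [IsFiniteMeasureOnCompacts μ] {K : Set α}
    (hK : IsCompact K) (hμK : ∀ᵐ l ∂μ, l ∈ K) {f : α → ℝ} (hf : Continuous f) :
    Integrable f μ := by
  rw [← Measure.restrict_eq_self_of_ae_mem hμK]
  exact hf.continuousOn.integrableOn_compact hK

lemma integral_pos_of_forall_pos {α : Type*} [MeasurableSpace α] {μ : Measure α} [NeZero μ]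
    {f : α → ℝ} (hf : ∀ x, 0 < f x) (hfi : Integrable f μ) : 0 < ∫ x, f x ∂μ := by
  have hsupp : Function.support f = univ := eq_univ_of_forall fun x => (hf x).ne'
  rw [integral_pos_iff_support_of_nonneg (fun x => (hf x).le) hfi, hsupp]
  exact Measure.measure_univ_pos.2 (NeZero.ne μ)

lemma integrable_mixupScoreLoss {μ : Measure ℝ} [IsFiniteMeasure μ]
    (hμ : ∀ᵐ l ∂μ, l ∈ Icc (0 : ℝ) 1) (a b : ℝ) :
    Integrable (fun l => mixupScoreLoss l (l * a + (1 - l) * b)) μ :=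
  Continuous.integrable_of_ae_mem_compact isCompact_Icc hμ (by unfold mixupScoreLoss; fun_prop)

lemma integral_two_mul_sub_one_sq_pos {μ : Measure ℝ} [IsFiniteMeasure μ]
    (hμ : ∀ᵐ l ∂μ, l ∈ Icc (0 : ℝ) 1)
    (hμ_half : μ {1 / 2}ᶜ ≠ 0) : 0 < ∫ l, (2 * l - 1) ^ 2 ∂μ := by
  have hsupp : {1 / 2}ᶜ ⊆ Function.support fun l : ℝ => (2 * l - 1) ^ 2 := by
    intro l hl
    have : 2 * l - 1 ≠ 0 := fun h => hl (by simp only [mem_singleton_iff]; linarith)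
    simpa using this
  have hsq : Integrable (fun l : ℝ => (2 * l - 1) ^ 2) μ :=
    Continuous.integrable_of_ae_mem_compact isCompact_Icc hμ (by fun_prop)
  rw [integral_pos_iff_support_of_nonneg (fun l => sq_nonneg _) hsq]
  exact (pos_iff_ne_zero.2 hμ_half).trans_le (measure_mono hsupp)

lemma mixupLoss_midpoint_lt {μ : Measure ℝ} [IsFiniteMeasure μ] [NeZero μ]
    (hμ : ∀ᵐ l ∂μ, l ∈ Icc (0 : ℝ) 1) {a b : ℝ} (hab : a + b ≠ 0) :
    mixupLoss μ ((a - b) / 2) ((b - a) / 2) < (mixupLoss μ a b + mixupLoss μ (-b) (-a)) / 2 := by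
  have hi := integrable_mixupScoreLoss hμ
  have hmean : Integrable (fun l => (mixupScoreLoss l (l * a + (1 - l) * b) +
      mixupScoreLoss l (l * -b + (1 - l) * -a)) / 2) μ :=
    ((hi a b).add (hi (-b) (-a))).div_const 2
  have hgap : (mixupLoss μ a b + mixupLoss μ (-b) (-a)) / 2 -
      mixupLoss μ ((a - b) / 2) ((b - a) / 2) = ∫ l, ((mixupScoreLoss l (l * a + (1 - l) * b) +
          mixupScoreLoss l (l * -b + (1 - l) * -a)) / 2 -
          mixupScoreLoss l (l * ((a - b) / 2) + (1 - l) * ((b - a) / 2))) ∂μ := by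
    rw [integral_sub hmean (hi _ _), integral_div, integral_add (hi a b) (hi (-b) (-a))]
    rfl
  rw [← sub_pos, hgap]
  refine integral_pos_of_forall_pos (fun l => sub_pos.2 ?_) (hmean.sub (hi _ _))
  convert mixupScoreLoss_midpoint_lt l (s := l * a + (1 - l) * b) (t := l * -b + (1 - l) * -a)
    (fun h => hab (by linarith)) using 2
  ring

lemma log_two_le_mixupLoss {μ : Measure ℝ} [IsProbabilityMeasure μ]
    (hμ : ∀ᵐ l ∂μ, l ∈ Icc (0 : ℝ) 1) {t : ℝ} (ht : t ≤ 0) :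
    log 2 ≤ mixupLoss μ t (-t) := by
  have hpoint (l : ℝ) : log 2 ≤ mixupScoreLoss l (l * t + (1 - l) * -t) := by
    rw [mixupScoreLoss_eq]
    nlinarith [log_two_sub_half_le_logisticLoss (l * t + (1 - l) * -t),
      mul_nonneg (sq_nonneg (2 * l - 1)) (neg_nonneg.2 ht)]
  calc log 2 = ∫ _, log 2 ∂μ := by simp
    _ ≤ mixupLoss μ t (-t) :=
      integral_mono (integrable_const _) (integrable_mixupScoreLoss hμ _ _) hpoint

lemma mixupLoss_le {μ : Measure ℝ} [IsProbabilityMeasure μ]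
    (hμ : ∀ᵐ l ∂μ, l ∈ Icc (0 : ℝ) 1) (t : ℝ) :
    mixupLoss μ t (-t) ≤ log 2 - (t / 2 - t ^ 2 / 8) * ∫ l, (2 * l - 1) ^ 2 ∂μ := by
  have hsq : Integrable (fun l : ℝ => (2 * l - 1) ^ 2) μ :=
    Continuous.integrable_of_ae_mem_compact isCompact_Icc hμ (by fun_prop)
  have hpoint (l : ℝ) : mixupScoreLoss l (l * t + (1 - l) * -t) ≤
      log 2 - (t / 2 - t ^ 2 / 8) * (2 * l - 1) ^ 2 := by
    rw [mixupScoreLoss_eq]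
    nlinarith [logisticLoss_le (l * t + (1 - l) * -t)]
  calc mixupLoss μ t (-t) ≤ ∫ l, (log 2 - (t / 2 - t ^ 2 / 8) * (2 * l - 1) ^ 2) ∂μ :=
        integral_mono (integrable_mixupScoreLoss hμ _ _)
          ((integrable_const _).sub (hsq.const_mul _)) hpoint
    _ = log 2 - (t / 2 - t ^ 2 / 8) * ∫ l, (2 * l - 1) ^ 2 ∂μ := by
      rw [integral_sub (integrable_const _) (hsq.const_mul _), integral_const_mul]
      simp

lemma LinearIndependent.exists_mem_span_inner_eq {ι E : Type*} [Fintype ι]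
    [NormedAddCommGroup E] [InnerProductSpace ℝ E] {v : ι → E} (hv : LinearIndependent ℝ v)
    (c : ι → ℝ) : ∃ θ ∈ Submodule.span ℝ (range v), ∀ i, ⟪θ, v i⟫ = c i := by
  let K := Submodule.span ℝ (range v)
  have : FiniteDimensional ℝ K := .span_of_finite ℝ (finite_range v)
  let f : K →ₗ[ℝ] ℝ := (Module.Basis.span hv).constr ℝ c
  refine ⟨((InnerProductSpace.toDual ℝ K).symm (LinearMap.toContinuousLinearMap f) : E),
    Submodule.coe_mem _, fun i => ?_⟩
  rw [show v i = (Module.Basis.span hv i : E) by rw [Module.Basis.span_apply],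
    ← Submodule.coe_inner, InnerProductSpace.toDual_symm_apply]
  exact (Module.Basis.span hv).constr_basis ℝ c i

theorem twoPointMixupLoss_minimizer_margin_general (d : ℕ)
    (μ : Measure ℝ) [IsProbabilityMeasure μ]
    (hsupp_sub : μ (Set.Icc (0 : ℝ) 1)ᶜ = 0)
    (hsupp_full : ∀ l ∈ Set.Icc (0 : ℝ) 1, ∀ U : Set ℝ, IsOpen U → l ∈ U → μ U ≠ 0)
    (hsym : μ.map (fun l => 1 - l) = μ)
    (x z : EuclideanSpace ℝ (Fin d)) (hli : LinearIndependent ℝ ![x, z]) :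
    ∀ θ ∈ Submodule.span ℝ ({x, z} : Set (EuclideanSpace ℝ (Fin d))),
      (∀ θ' ∈ Submodule.span ℝ ({x, z} : Set (EuclideanSpace ℝ (Fin d))),
        twoPointMixupLoss μ x z θ ≤ twoPointMixupLoss μ x z θ') →
      ⟪θ, x⟫ = -⟪θ, z⟫ ∧ 0 < ⟪θ, x⟫ := by
  intro θ _ hmin
  have hμ : ∀ᵐ l ∂μ, l ∈ Icc (0 : ℝ) 1 := mem_ae_iff.2 hsupp_sub
  have hle (a b : ℝ) : mixupLoss μ ⟪θ, x⟫ ⟪θ, z⟫ ≤ mixupLoss μ a b := by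
    obtain ⟨θ', hθ', hθ'c⟩ := hli.exists_mem_span_inner_eq ![a, b]
    rw [Matrix.range_cons_cons_empty] at hθ'
    have hx' : ⟪θ', x⟫ = a := hθ'c 0
    have hz' : ⟪θ', z⟫ = b := hθ'c 1
    simpa only [twoPointMixupLoss_eq_mixupLoss, hx', hz'] using hmin θ' hθ'
  have hanti : ⟪θ, x⟫ = -⟪θ, z⟫ := by
    by_contra h
    have hlt := mixupLoss_midpoint_lt hμ (a := ⟪θ, x⟫) (b := ⟪θ, z⟫) fun h' => h (by linarith)
    rw [mixupLoss_neg_swap hsym] at hlt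
    linarith [hle ((⟪θ, x⟫ - ⟪θ, z⟫) / 2) ((⟪θ, z⟫ - ⟪θ, x⟫) / 2)]
  refine ⟨hanti, not_le.1 fun hx => ?_⟩
  have hvar := integral_two_mul_sub_one_sq_pos hμ
    (hsupp_full 0 (by simp) _ isOpen_compl_singleton (by norm_num))
  have hlog := log_two_le_mixupLoss hμ hx
  rw [show ⟪θ, z⟫ = -⟪θ, x⟫ by linarith] at hle
  linarith [hle 2 (-2), mixupLoss_le hμ 2]

/-- Part I of Theorem 5's proof: for linearly independent `x` (label `+1`) and `z`
(label `-1`) and a symmetric mixing measure with topological support `[0,1]`, every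
minimizer of the two-point Mixup loss over `span {x, z}` satisfies
`⟪θ, x⟫ = -⟪θ, z⟫ > 0`. -/
theorem twoPointMixupLoss_minimizer_margin (d : ℕ) (hd : 2 ≤ d)
    (μ : Measure ℝ) [IsProbabilityMeasure μ]
    (hsupp_sub : μ (Set.Icc (0 : ℝ) 1)ᶜ = 0)
    (hsupp_full : ∀ l ∈ Set.Icc (0 : ℝ) 1, ∀ U : Set ℝ, IsOpen U → l ∈ U → μ U ≠ 0)
    (hsym : μ.map (fun l => 1 - l) = μ)
    (x z : EuclideanSpace ℝ (Fin d)) (hli : LinearIndependent ℝ ![x, z]) :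
    ∀ θ ∈ Submodule.span ℝ ({x, z} : Set (EuclideanSpace ℝ (Fin d))),
      (∀ θ' ∈ Submodule.span ℝ ({x, z} : Set (EuclideanSpace ℝ (Fin d))),
        twoPointMixupLoss μ x z θ ≤ twoPointMixupLoss μ x z θ') →
      ⟪θ, x⟫ = -⟪θ, z⟫ ∧ 0 < ⟪θ, x⟫ :=
  twoPointMixupLoss_minimizer_margin_general d μ hsupp_sub hsupp_full hsym x z hli
end
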